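/- arXiv:1607.02634 — 3 statements merged into one kernel-verified Lean document; each statement's English description precedes it below -/
import Mathlib

section
/- Let ε > 0, t > 0 and define I(z) = ∫_{1/√t}^{∞} s^{-2} e^{-z² s²/(2ε)} ds for z ∈ (0,1). Then ∫₀¹ I(z) dz ≤ k √ε for a constant k depending only on t (not on ε). Consequently, the L² norm over (0,1) of the function z ↦ ∫_{1/√t}^{∞} s^{-2} e^{-z²s²/(4ε)} ds, squared via Cauchy–Schwarz, satisfies ∫₀¹ ( ∫_{1/√t}^{∞} s^{-2} e^{-z²s²/(4ε)} ds )² dz ≤ k √t · √ε. -/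
/-!
Write `c` for the denominator of the exponent and `m = 1 / √t`. After swapping the order of
integration (Fubini), the `z`-integral over `(0, 1]` of the Gaussian factor is at most the
half-line Gaussian integral `√(π c) / (2 s)`, which leaves
`√(π c) / 2 · ∫_m^∞ s⁻³ ds = √(π c) m⁻² / 4`; with `c = 2ε` this is `O(√ε)`. For the square,
the inner integral is bounded by `∫_m^∞ s⁻² ds = m⁻¹ = √t`, so the `L²` norm squared is at most
`√t` times the `L¹` norm.
-/

open Real MeasureTheory Set

section InversePowers

variable {m : ℝ}

lemma inv_pow_eq_rpow_neg {s : ℝ} (hs : 0 < s) (n : ℕ) : s⁻¹ ^ n = s ^ (-(n : ℝ)) := by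
  rw [rpow_neg hs.le, rpow_natCast, inv_pow]

lemma integrableOn_Ici_inv_pow (hm : 0 < m) {n : ℕ} (hn : 1 < n) :
    IntegrableOn (fun s : ℝ => s⁻¹ ^ n) (Ici m) :=
  ((integrableOn_Ioi_rpow_of_lt (neg_lt_neg (by exact_mod_cast hn)) hm).congr_fun
    (fun s hs => (inv_pow_eq_rpow_neg (hm.trans hs) n).symm) measurableSet_Ioi).congr_set_ae
    Ioi_ae_eq_Ici.symm

lemma integral_Ici_inv_pow (hm : 0 < m) {n : ℕ} (hn : 1 < n) :
    ∫ s in Ici m, s⁻¹ ^ n = m⁻¹ ^ (n - 1) / (n - 1 : ℕ) := by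
  rw [integral_Ici_eq_integral_Ioi, setIntegral_congr_fun measurableSet_Ioi
      (fun s hs => inv_pow_eq_rpow_neg (hm.trans hs) n),
    integral_Ioi_rpow_of_lt (neg_lt_neg (by exact_mod_cast hn)) hm,
    show -(n : ℝ) + 1 = -((n - 1 : ℕ) : ℝ) by push_cast [Nat.cast_sub hn.le]; ring,
    ← inv_pow_eq_rpow_neg hm]
  ring

end InversePowers

section GaussianKernel

variable {m c : ℝ}

lemma inv_sq_mul_exp_le_inv_sq (hc : 0 ≤ c) (z s : ℝ) :
    s⁻¹ ^ 2 * exp (-(z ^ 2 * s ^ 2) / c) ≤ s⁻¹ ^ 2 :=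
  mul_le_of_le_one_right (by positivity)
    (exp_le_one_iff.2 (div_nonpos_of_nonpos_of_nonneg (neg_nonpos.2 (by positivity)) hc))

lemma integrableOn_inv_sq_mul_exp (hm : 0 < m) (hc : 0 ≤ c) (z : ℝ) :
    IntegrableOn (fun s => s⁻¹ ^ 2 * exp (-(z ^ 2 * s ^ 2) / c)) (Ici m) := by
  refine Integrable.mono (integrableOn_Ici_inv_pow hm one_lt_two) (by fun_prop)
    (ae_of_all _ fun s => ?_)
  rw [norm_of_nonneg (by positivity), norm_of_nonneg (by positivity)]
  exact inv_sq_mul_exp_le_inv_sq hc z s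

lemma integrable_prod_inv_sq_mul_exp {μ : Measure ℝ} [IsFiniteMeasure μ] (hm : 0 < m)
    (hc : 0 ≤ c) :
    Integrable (Function.uncurry fun z s => s⁻¹ ^ 2 * exp (-(z ^ 2 * s ^ 2) / c))
      (μ.prod (volume.restrict (Ici m))) := by
  have hdom : Integrable (fun p : ℝ × ℝ => (1 : ℝ) * p.2⁻¹ ^ 2)
      (μ.prod (volume.restrict (Ici m))) :=
    (integrable_const 1).mul_prod (integrableOn_Ici_inv_pow hm one_lt_two)
  refine hdom.mono (Measurable.aestronglyMeasurable (by fun_prop)) (ae_of_all _ fun p => ?_)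
  rw [Function.uncurry_apply_pair, one_mul, norm_of_nonneg (by positivity),
    norm_of_nonneg (by positivity)]
  exact inv_sq_mul_exp_le_inv_sq hc p.1 p.2

lemma integral_inv_sq_mul_exp_le (hm : 0 < m) (hc : 0 ≤ c) (z : ℝ) :
    ∫ s in Ici m, s⁻¹ ^ 2 * exp (-(z ^ 2 * s ^ 2) / c) ≤ m⁻¹ := by
  calc ∫ s in Ici m, s⁻¹ ^ 2 * exp (-(z ^ 2 * s ^ 2) / c)
      ≤ ∫ s in Ici m, s⁻¹ ^ 2 :=
        setIntegral_mono_on (integrableOn_inv_sq_mul_exp hm hc z)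
          (integrableOn_Ici_inv_pow hm one_lt_two)
          measurableSet_Ici fun s _ => inv_sq_mul_exp_le_inv_sq hc z s
    _ = m⁻¹ := by
        rw [integral_Ici_inv_pow hm one_lt_two]
        norm_num

lemma setIntegral_exp_neg_mul_sq_le {b : ℝ} (hb : 0 < b) {S : Set ℝ} (hS : S ⊆ Ioi 0) :
    ∫ z in S, exp (-b * z ^ 2) ≤ √(π / b) / 2 := by
  rw [← integral_gaussian_Ioi]
  exact setIntegral_mono_set (integrable_exp_neg_mul_sq hb).integrableOn
    (ae_of_all _ fun z => (exp_pos _).le) (ae_of_all _ hS)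

lemma integral_Ioc_inv_sq_mul_exp_le {s : ℝ} (hs : 0 < s) (hc : 0 < c) :
    ∫ z in Ioc 0 1, s⁻¹ ^ 2 * exp (-(z ^ 2 * s ^ 2) / c) ≤ √(π * c) / 2 * s⁻¹ ^ 3 := by
  have hexp : ∀ z : ℝ, exp (-(z ^ 2 * s ^ 2) / c) = exp (-(s ^ 2 / c) * z ^ 2) := fun z => by
    ring_nf
  simp_rw [hexp]
  rw [integral_const_mul]
  calc s⁻¹ ^ 2 * ∫ z in Ioc 0 1, exp (-(s ^ 2 / c) * z ^ 2)
      ≤ s⁻¹ ^ 2 * (√(π / (s ^ 2 / c)) / 2) :=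
        mul_le_mul_of_nonneg_left
          (setIntegral_exp_neg_mul_sq_le (by positivity) Ioc_subset_Ioi_self) (by positivity)
    _ = √(π * c) / 2 * s⁻¹ ^ 3 := by
        rw [div_div_eq_mul_div, sqrt_div' _ (sq_nonneg s), sqrt_sq hs.le]
        field_simp

lemma integral_integral_inv_sq_mul_exp_le (hm : 0 < m) (hc : 0 < c) :
    ∫ z in (0 : ℝ)..1, ∫ s in Ici m, s⁻¹ ^ 2 * exp (-(z ^ 2 * s ^ 2) / c)
      ≤ √(π * c) * m⁻¹ ^ 2 / 4 := by
  have hprod := integrable_prod_inv_sq_mul_exp (μ := volume.restrict (Ioc 0 1)) hm hc.le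
  rw [intervalIntegral.integral_of_le zero_le_one, integral_integral_swap hprod]
  calc ∫ s in Ici m, ∫ z in Ioc 0 1, s⁻¹ ^ 2 * exp (-(z ^ 2 * s ^ 2) / c)
      ≤ ∫ s in Ici m, √(π * c) / 2 * s⁻¹ ^ 3 :=
        setIntegral_mono_on hprod.integral_prod_right
          ((integrableOn_Ici_inv_pow hm (by norm_num)).const_mul _)
          measurableSet_Ici fun s hs => integral_Ioc_inv_sq_mul_exp_le (hm.trans_le hs) hc
    _ = √(π * c) * m⁻¹ ^ 2 / 4 := by
        rw [integral_const_mul, integral_Ici_inv_pow hm (by norm_num)]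
        norm_num
        ring

end GaussianKernel

lemma integral_sq_le_mul_integral {α : Type*} [MeasurableSpace α] {μ : Measure α}
    {f : α → ℝ} {M : ℝ} (hf : Integrable f μ) (hf0 : ∀ x, 0 ≤ f x) (hfM : ∀ x, f x ≤ M) :
    ∫ x, f x ^ 2 ∂μ ≤ M * ∫ x, f x ∂μ := by
  rw [← integral_const_mul]
  refine integral_mono_of_nonneg (ae_of_all _ fun x => sq_nonneg _) (hf.const_mul M)
    (ae_of_all _ fun x => ?_)
  show f x ^ 2 ≤ M * f x
  rw [sq]
  exact mul_le_mul_of_nonneg_right (hfM x) (hf0 x)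

lemma sqrt_pi_mul_le {a ε : ℝ} (ha : a ≤ 4) (hε : 0 ≤ ε) : √(π * (a * ε)) ≤ 4 * √ε := by
  have hπa : π * a ≤ 4 ^ 2 := by
    rcases le_total 0 a with h | h <;> nlinarith [pi_pos, pi_le_four]
  calc √(π * (a * ε)) ≤ √(4 ^ 2 * ε) :=
        sqrt_le_sqrt (by nlinarith [mul_le_mul_of_nonneg_right hπa hε])
    _ = 4 * √ε := by rw [sqrt_mul (by positivity), sqrt_sq (by norm_num)]

theorem tail_integral_L2_bound (t : ℝ) (ht : 0 < t) :
    ∃ k : ℝ, 0 < k ∧ ∀ ε : ℝ, 0 < ε →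
      (∫ z in (0:ℝ)..1, ∫ s in Set.Ici (1 / Real.sqrt t),
          s⁻¹ ^ 2 * Real.exp (-(z ^ 2 * s ^ 2) / (2 * ε))) ≤ k * Real.sqrt ε ∧
      (∫ z in (0:ℝ)..1, (∫ s in Set.Ici (1 / Real.sqrt t),
          s⁻¹ ^ 2 * Real.exp (-(z ^ 2 * s ^ 2) / (4 * ε))) ^ 2)
        ≤ k * Real.sqrt t * Real.sqrt ε := by
  have hm : 0 < 1 / √t := by positivity
  have hminv : (1 / √t)⁻¹ = √t := by rw [one_div, inv_inv]
  refine ⟨t, ht, fun ε hε => ⟨?_, ?_⟩⟩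
  · calc _ ≤ √(π * (2 * ε)) * (1 / √t)⁻¹ ^ 2 / 4 :=
          integral_integral_inv_sq_mul_exp_le hm (by positivity)
      _ ≤ 4 * √ε * t / 4 := by
          rw [hminv, sq_sqrt ht.le]
          gcongr
          exact sqrt_pi_mul_le (by norm_num) hε.le
      _ = t * √ε := by ring
  · rw [intervalIntegral.integral_of_le zero_le_one]
    calc _ ≤ (1 / √t)⁻¹ * ∫ z in Ioc 0 1, ∫ s in Ici (1 / √t),
              s⁻¹ ^ 2 * exp (-(z ^ 2 * s ^ 2) / (4 * ε)) :=
          integral_sq_le_mul_integral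
            (integrable_prod_inv_sq_mul_exp hm (by positivity)).integral_prod_left
            (fun z => setIntegral_nonneg measurableSet_Ici fun s _ => by positivity)
            (integral_inv_sq_mul_exp_le hm (by positivity))
      _ ≤ √t * (4 * √ε * t / 4) := by
          rw [← intervalIntegral.integral_of_le zero_le_one, hminv]
          gcongr
          refine (integral_integral_inv_sq_mul_exp_le hm (by positivity)).trans ?_
          rw [hminv, sq_sqrt ht.le]
          gcongr
          exact sqrt_pi_mul_le le_rfl hε.le
      _ = t * √t * √ε := by ring
end

section
/- Let ε > 0, t > 0, and let g : [0,t] → ℝ be a measurable function with |g(τ)| ≤ M for all τ. Define J(z) = ∫₀ᵗ √ε / √(4π(t−τ)) · 1/(2(t−τ)) · e^{−z²/(4ε(t−τ))} g(τ) dτ for z ∈ (0,1). Then |z · J(z)| ≤ k ε e^{−c z/√(εt)} for constants k, c > 0 depending only on M, and hence ∫₀¹ (z J(z))² dz ≤ k' ε^{5/2}, i.e. ‖z J‖_{L²(0,1)} ≤ k'' ε^{5/4}. -/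
/-!
After `s = t - τ` the kernel is `√ε / (4√π) · s ^ (-3/2) · exp (-z² / (4εs))`. Since `s ≤ t`,
half of the Gaussian exponent is bounded by the decay factor `exp (-z² / (8εt))`; the other half
is integrated over all `s > 0`, where the substitution `s ↦ 1/s` turns `∫ s ^ (-3/2) · exp (-b/s)`
into the Gamma integral `Γ(1/2) / √b = √(π/b)`. With `b = z² / (8ε)` this cancels the factor `z`
and leaves `O(ε)`. Finally `exp (-w² / 8) ≤ e² · exp (-w)`, and integrating the square of the
exponential over `(0, 1)` gives `ε² · √(εt)`.
-/

open Real MeasureTheory Set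

-- the integrand produced by `integral_comp_rpow_Ioi` for the substitution `p = -1`
lemma rpow_neg_sub_one_mul_exp_neg_div_eq {a r x : ℝ} (hx : 0 < x) :
    (|(-1 : ℝ)| * x ^ ((-1 : ℝ) - 1)) • ((x ^ (-1 : ℝ)) ^ (a - 1) * exp (-(r * x ^ (-1 : ℝ))))
      = x ^ (-a - 1) * exp (-(r / x)) := by
  rw [rpow_neg_one, smul_eq_mul, abs_neg, abs_one, one_mul, ← div_eq_mul_inv, inv_rpow hx.le,
    ← rpow_neg hx.le, ← mul_assoc, ← rpow_add hx]
  ring_nf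

theorem integrableOn_rpow_neg_mul_exp_neg_div {a r : ℝ} (ha : 0 < a) (hr : 0 < r) :
    IntegrableOn (fun x : ℝ ↦ x ^ (-a - 1) * exp (-(r / x))) (Ioi 0) := by
  have hΓ : IntegrableOn (fun y : ℝ ↦ y ^ (a - 1) * exp (-(r * y))) (Ioi 0) := by
    simpa using integrableOn_rpow_mul_exp_neg_mul_rpow (p := 1) (by linarith) one_pos hr
  refine ((integrableOn_Ioi_comp_rpow_iff _ (by norm_num : (-1 : ℝ) ≠ 0)).mpr hΓ).congr_fun
    (fun x hx ↦ rpow_neg_sub_one_mul_exp_neg_div_eq hx) measurableSet_Ioi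

theorem integral_rpow_neg_mul_exp_neg_div {a r : ℝ} (ha : 0 < a) (hr : 0 < r) :
    ∫ x in Ioi 0, x ^ (-a - 1) * exp (-(r / x)) = (1 / r) ^ a * Gamma a := by
  rw [← integral_rpow_mul_exp_neg_mul_Ioi ha hr,
    ← integral_comp_rpow_Ioi (fun y ↦ y ^ (a - 1) * exp (-(r * y))) (p := -1) (by norm_num)]
  exact setIntegral_congr_fun measurableSet_Ioi
    (fun x hx ↦ (rpow_neg_sub_one_mul_exp_neg_div_eq hx).symm)

theorem intervalIntegral_le_integral_Ioi {f : ℝ → ℝ} {T : ℝ} (hT : 0 ≤ T)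
    (hf : IntegrableOn f (Ioi 0)) (hf₀ : ∀ x ∈ Ioi 0, 0 ≤ f x) :
    ∫ x in 0..T, f x ≤ ∫ x in Ioi 0, f x := by
  rw [intervalIntegral.integral_of_le hT]
  exact setIntegral_mono_set hf ((ae_restrict_iff' measurableSet_Ioi).mpr (.of_forall hf₀))
    (.of_forall Ioc_subset_Ioi_self)

lemma heat_prefactor_eq {ε s : ℝ} (hs : 0 < s) :
    √ε / √(4 * π * s) * (1 / (2 * s)) = √ε / (4 * √π) * s ^ (-(1 / 2 : ℝ) - 1) := by
  have hsqrt : √(4 * π * s) = 2 * √π * √s := by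
    rw [sqrt_mul (by positivity), sqrt_mul (by norm_num), show (4 : ℝ) = 2 ^ 2 by norm_num,
      sqrt_sq (by norm_num)]
  have hrpow : s ^ (-(1 / 2 : ℝ) - 1) = (s * √s)⁻¹ := by
    rw [show -(1 / 2 : ℝ) - 1 = -(1 + 1 / 2) by norm_num, rpow_neg hs.le, rpow_add hs, rpow_one,
      sqrt_eq_rpow]
  have hsqrt_pos : 0 < √s := sqrt_pos.mpr hs
  rw [hsqrt, hrpow]
  field_simp
  ring

lemma exp_neg_div_le_mul_exp {ε s t z : ℝ} (hε : 0 < ε) (hs : 0 < s) (hst : s ≤ t) :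
    exp (-z ^ 2 / (4 * ε * s)) ≤ exp (-(z ^ 2 / (8 * ε * t))) * exp (-(z ^ 2 / (8 * ε) / s)) := by
  rw [← exp_add, exp_le_exp]
  have hmono : z ^ 2 / (8 * ε * t) ≤ z ^ 2 / (8 * ε * s) := by gcongr
  have hsplit : -z ^ 2 / (4 * ε * s) = -(z ^ 2 / (8 * ε * s)) - z ^ 2 / (8 * ε) / s := by
    field_simp
    ring
  linarith

lemma abs_heat_integrand_le {ε s t z c M : ℝ} (hε : 0 < ε) (hs : 0 ≤ s) (hst : s ≤ t)
    (hc : |c| ≤ M) :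
    |√ε / √(4 * π * s) * (1 / (2 * s)) * exp (-z ^ 2 / (4 * ε * s)) * c|
      ≤ M * √ε / (4 * √π) * exp (-(z ^ 2 / (8 * ε * t)))
        * (s ^ (-(1 / 2 : ℝ) - 1) * exp (-(z ^ 2 / (8 * ε) / s))) := by
  rcases hs.eq_or_lt with rfl | hs
  -- at `s = 0` both sides are junk zeros: `√ε / 0 = 0` and `0 ^ (-3/2) = 0`
  · rw [zero_rpow (by norm_num)]
    simp
  rw [heat_prefactor_eq hs, abs_mul, abs_of_nonneg (by positivity)]
  calc √ε / (4 * √π) * s ^ (-(1 / 2 : ℝ) - 1) * exp (-z ^ 2 / (4 * ε * s)) * |c|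
      ≤ √ε / (4 * √π) * s ^ (-(1 / 2 : ℝ) - 1)
          * (exp (-(z ^ 2 / (8 * ε * t))) * exp (-(z ^ 2 / (8 * ε) / s))) * M := by
        gcongr
        exact exp_neg_div_le_mul_exp hε hs hst
    _ = _ := by ring

lemma heat_constant_le {ε z : ℝ} (hε : 0 < ε) (hz : 0 < z) :
    √ε / (4 * √π) * ((1 / (z ^ 2 / (8 * ε))) ^ (1 / 2 : ℝ) * Gamma (1 / 2)) ≤ ε / z := by
  have h8 : √8 ≤ 4 := by
    rw [show (4 : ℝ) = √(4 ^ 2) by rw [sqrt_sq (by norm_num)]]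
    exact sqrt_le_sqrt (by norm_num)
  have hπ : 0 < √π := sqrt_pos.mpr pi_pos
  rw [← sqrt_eq_rpow, Gamma_one_half_eq, one_div_div, sqrt_div' _ (sq_nonneg z), sqrt_sq hz.le,
    sqrt_mul (by norm_num)]
  calc √ε / (4 * √π) * (√8 * √ε / z * √π) = √8 / 4 * (ε / z) := by
        field_simp
        rw [sq_sqrt hε.le]
    _ ≤ 1 * (ε / z) := by gcongr; linarith
    _ = ε / z := one_mul _

theorem abs_integral_heat_le {ε t z M : ℝ} {g : ℝ → ℝ} (hε : 0 < ε) (ht : 0 ≤ t) (hz : 0 < z)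
    (hg : ∀ τ ∈ Icc 0 t, |g τ| ≤ M) :
    |∫ τ in 0..t, √ε / √(4 * π * (t - τ)) * (1 / (2 * (t - τ)))
        * exp (-z ^ 2 / (4 * ε * (t - τ))) * g τ|
      ≤ M * ε / z * exp (-(z ^ 2 / (8 * ε * t))) := by
  set b := z ^ 2 / (8 * ε)
  have hb : 0 < b := by positivity
  set K : ℝ → ℝ := fun s ↦ s ^ (-(1 / 2 : ℝ) - 1) * exp (-(b / s))
  set E := exp (-(z ^ 2 / (8 * ε * t)))
  set C := M * √ε / (4 * √π) * E
  have hM : 0 ≤ M := (abs_nonneg _).trans (hg 0 ⟨le_rfl, ht⟩)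
  have hK_nonneg : ∀ s, 0 ≤ s → 0 ≤ K s := fun s hs ↦ mul_nonneg (rpow_nonneg hs _) (exp_pos _).le
  have hK : IntegrableOn K (Ioi 0) := integrableOn_rpow_neg_mul_exp_neg_div (by norm_num) hb
  have hK_int : IntervalIntegrable K volume 0 t :=
    (intervalIntegrable_iff_integrableOn_Ioc_of_le ht).mpr (hK.mono_set Ioc_subset_Ioi_self)
  have hCK_int : IntervalIntegrable (fun τ ↦ C * K (t - τ)) volume 0 t := by
    simpa using (hK_int.comp_sub_left t).symm.const_mul C
  have hpointwise : ∀ τ ∈ uIoc 0 t, ‖√ε / √(4 * π * (t - τ)) * (1 / (2 * (t - τ)))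
      * exp (-z ^ 2 / (4 * ε * (t - τ))) * g τ‖ ≤ C * K (t - τ) := by
    intro τ hτ
    rw [uIoc_of_le ht] at hτ
    exact abs_heat_integrand_le hε (by linarith [hτ.2]) (by linarith [hτ.1])
      (hg τ ⟨hτ.1.le, hτ.2⟩)
  have hK_le : ∫ s in 0..t, K s ≤ (1 / b) ^ (1 / 2 : ℝ) * Gamma (1 / 2) :=
    (intervalIntegral_le_integral_Ioi ht hK (fun s hs ↦ hK_nonneg s (le_of_lt hs))).trans_eq
      (integral_rpow_neg_mul_exp_neg_div (by norm_num) hb)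
  calc _ ≤ |∫ τ in 0..t, C * K (t - τ)| :=
        intervalIntegral.norm_integral_le_abs_of_norm_le
          ((ae_restrict_iff' measurableSet_uIoc).mpr (.of_forall hpointwise)) hCK_int
    _ = C * ∫ s in 0..t, K s := by
        rw [intervalIntegral.integral_const_mul, intervalIntegral.integral_comp_sub_left K t,
          sub_self, sub_zero, abs_of_nonneg]
        exact mul_nonneg (by positivity)
          (intervalIntegral.integral_nonneg ht (fun s hs ↦ hK_nonneg s hs.1))
    _ ≤ C * ((1 / b) ^ (1 / 2 : ℝ) * Gamma (1 / 2)) := by gcongr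
    _ = M * E * (√ε / (4 * √π) * ((1 / b) ^ (1 / 2 : ℝ) * Gamma (1 / 2))) := by ring
    _ ≤ M * E * (ε / z) := by gcongr; exact heat_constant_le hε hz
    _ = M * ε / z * E := by ring

lemma exp_neg_sq_div_eight_le (x : ℝ) : exp (-(x ^ 2 / 8)) ≤ exp 2 * exp (-x) := by
  rw [← exp_add, exp_le_exp]
  nlinarith [sq_nonneg (x - 4)]

theorem abs_mul_integral_heat_le {ε t z M : ℝ} {g : ℝ → ℝ} (hε : 0 < ε) (ht : 0 < t)
    (hz : 0 < z) (hg : ∀ τ ∈ Icc 0 t, |g τ| ≤ M) :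
    |z * ∫ τ in 0..t, √ε / √(4 * π * (t - τ)) * (1 / (2 * (t - τ)))
        * exp (-z ^ 2 / (4 * ε * (t - τ))) * g τ|
      ≤ M * exp 2 * ε * exp (-z / √(ε * t)) := by
  have hM : 0 ≤ M := (abs_nonneg _).trans (hg 0 ⟨le_rfl, ht.le⟩)
  have hdecay : exp (-(z ^ 2 / (8 * ε * t))) ≤ exp 2 * exp (-z / √(ε * t)) := by
    have hw : (z / √(ε * t)) ^ 2 / 8 = z ^ 2 / (8 * ε * t) := by
      rw [div_pow, sq_sqrt (by positivity)]
      ring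
    simpa only [hw, neg_div] using exp_neg_sq_div_eight_le (z / √(ε * t))
  calc _ = z * |∫ τ in 0..t, √ε / √(4 * π * (t - τ)) * (1 / (2 * (t - τ)))
        * exp (-z ^ 2 / (4 * ε * (t - τ))) * g τ| := by rw [abs_mul, abs_of_pos hz]
    _ ≤ z * (M * ε / z * exp (-(z ^ 2 / (8 * ε * t)))) := by
        gcongr
        exact abs_integral_heat_le hε ht.le hz hg
    _ = M * ε * exp (-(z ^ 2 / (8 * ε * t))) := by field_simp
    _ ≤ M * ε * (exp 2 * exp (-z / √(ε * t))) := by gcongr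
    _ = M * exp 2 * ε * exp (-z / √(ε * t)) := by ring

theorem integral_sq_le_of_abs_le_mul_exp {f : ℝ → ℝ} {A c L : ℝ} (hc : 0 < c) (hL : 0 < L)
    (hf : ∀ z ∈ Ioo (0 : ℝ) 1, |f z| ≤ A * exp (-(c * z) / L)) :
    ∫ z in 0..1, f z ^ 2 ≤ A ^ 2 * L / (2 * c) := by
  have ha : -(2 * c / L) < 0 := by
    have : 0 < 2 * c / L := by positivity
    linarith
  have hmaj : ∀ z ∈ Ioo (0 : ℝ) 1, f z ^ 2 ≤ A ^ 2 * exp (-(2 * c / L) * z) := by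
    intro z hz
    calc f z ^ 2 = |f z| ^ 2 := (sq_abs _).symm
      _ ≤ (A * exp (-(c * z) / L)) ^ 2 := pow_le_pow_left₀ (abs_nonneg _) (hf z hz) 2
      _ = A ^ 2 * exp (-(2 * c / L) * z) := by
          rw [mul_pow, sq (exp _), ← exp_add]
          ring_nf
  have hint : IntegrableOn (fun z ↦ A ^ 2 * exp (-(2 * c / L) * z)) (Ioi 0) :=
    (integrableOn_exp_mul_Ioi ha 0).const_mul _
  rw [intervalIntegral.integral_of_le zero_le_one]
  calc ∫ z in Ioc 0 1, f z ^ 2 ≤ ∫ z in Ioc 0 1, A ^ 2 * exp (-(2 * c / L) * z) := by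
        refine integral_mono_of_nonneg (.of_forall fun z ↦ sq_nonneg _)
          (hint.mono_set Ioc_subset_Ioi_self) ?_
        rw [← Measure.restrict_congr_set Ioo_ae_eq_Ioc]
        exact (ae_restrict_iff' measurableSet_Ioo).mpr (.of_forall hmaj)
    _ ≤ ∫ z in Ioi 0, A ^ 2 * exp (-(2 * c / L) * z) :=
        setIntegral_mono_set hint ((ae_restrict_iff' measurableSet_Ioi).mpr
          (.of_forall fun z _ ↦ by positivity)) (.of_forall Ioc_subset_Ioi_self)
    _ = A ^ 2 * L / (2 * c) := by
        rw [integral_const_mul, integral_exp_mul_Ioi ha, mul_zero, exp_zero]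
        field_simp

theorem zJ1_estimate (M t : ℝ) (hM : 0 < M) (ht : 0 < t) :
    ∃ k c k' : ℝ, 0 < k ∧ 0 < c ∧ 0 < k' ∧
      ∀ ε : ℝ, 0 < ε → ∀ g : ℝ → ℝ, Measurable g → (∀ τ ∈ Set.Icc (0:ℝ) t, |g τ| ≤ M) →
        (∀ z ∈ Set.Ioo (0:ℝ) 1,
          |z * ∫ τ in (0:ℝ)..t, Real.sqrt ε / Real.sqrt (4 * π * (t - τ)) *
              (1 / (2 * (t - τ))) * Real.exp (-z ^ 2 / (4 * ε * (t - τ))) * g τ|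
            ≤ k * ε * Real.exp (-(c * z) / Real.sqrt (ε * t))) ∧
        (∫ z in (0:ℝ)..1, (z * ∫ τ in (0:ℝ)..t, Real.sqrt ε / Real.sqrt (4 * π * (t - τ)) *
              (1 / (2 * (t - τ))) * Real.exp (-z ^ 2 / (4 * ε * (t - τ))) * g τ) ^ 2)
            ≤ k' * ε ^ ((5:ℝ)/2) := by
  refine ⟨M * exp 2, 1, (M * exp 2) ^ 2 * √t / 2, by positivity, one_pos, by positivity,
    fun ε hε g _ hg ↦ ?_⟩
  have hpointwise : ∀ z ∈ Ioo (0 : ℝ) 1,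
      |z * ∫ τ in (0:ℝ)..t, √ε / √(4 * π * (t - τ)) * (1 / (2 * (t - τ)))
          * exp (-z ^ 2 / (4 * ε * (t - τ))) * g τ|
        ≤ M * exp 2 * ε * exp (-(1 * z) / √(ε * t)) := fun z hz ↦ by
    simpa only [one_mul] using abs_mul_integral_heat_le hε ht hz.1 hg
  refine ⟨hpointwise, ?_⟩
  calc _ ≤ (M * exp 2 * ε) ^ 2 * √(ε * t) / (2 * 1) :=
        integral_sq_le_of_abs_le_mul_exp one_pos (by positivity) hpointwise
    _ = (M * exp 2) ^ 2 * √t / 2 * ε ^ ((5:ℝ)/2) := by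
        rw [show (5:ℝ) / 2 = 2 + 1 / 2 by norm_num, rpow_add hε, rpow_two, ← sqrt_eq_rpow,
          sqrt_mul hε.le]
        ring
end

section
/- Let ε > 0, α ∈ ℝ, t > 0, and define φ(z) = −∫₀ᵗ (1/√(4π(t−τ))) · (z/(2√ε (t−τ))) e^{−z²/(4ε(t−τ))} · 2τ (cos(α(τ−t)) − sin(α(τ−t))) dτ. Then for each fixed z > 0, |φ(z)| ≤ k e^{−c z/√(εt)} for constants k, c > 0 depending on t and α but not on ε. -/
open Real MeasureTheory

/-- Key exponential inequality: `exp(-z²/(4q²)) ≤ e · exp(-z/q)` for `q > 0`. -/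
lemma exp_sq_le_aux {z q : ℝ} (hq : 0 < q) :
    Real.exp (-z ^ 2 / (4 * q ^ 2)) ≤ Real.exp 1 * Real.exp (-z / q) := by
  rw [← Real.exp_add]
  apply Real.exp_le_exp.mpr
  have h : 1 + -z / q - -z ^ 2 / (4 * q ^ 2) = ((2 * q - z) / (2 * q)) ^ 2 := by
    field_simp
    ring
  linarith [sq_nonneg ((2 * q - z) / (2 * q)), h]

set_option maxHeartbeats 1000000 in
/-- The tangential boundary-layer corrector with boundary data `g(τ) = τ` decays
exponentially in `z/√ε` away from the boundary `z = 0`. -/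
theorem tangential_corrector_exponential_decay (t α : ℝ) (ht : 0 < t) :
    ∃ k c : ℝ, 0 < k ∧ 0 < c ∧ ∀ ε : ℝ, 0 < ε → ∀ z : ℝ, 0 < z →
      |-(∫ τ in (0:ℝ)..t, 1 / Real.sqrt (4 * π * (t - τ)) *
          (z / (2 * Real.sqrt ε * (t - τ))) * Real.exp (-z ^ 2 / (4 * ε * (t - τ))) *
          (2 * τ * (Real.cos (α * (τ - t)) - Real.sin (α * (τ - t)))))|
        ≤ k * Real.exp (-(c * z) / Real.sqrt (ε * t)) := by
  have hπ : (0:ℝ) < π := Real.pi_pos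
  refine ⟨4 * t * Real.exp 1 / Real.sqrt (4 * π) + 1, 1, by positivity, one_pos, ?_⟩
  intro ε hε z hz
  set K : ℝ := 4 * t * Real.exp 1 / Real.sqrt (4 * π) with hKdef
  have hK : 0 < K := by positivity
  set F : ℝ → ℝ := fun τ => 1 / Real.sqrt (4 * π * (t - τ)) *
          (z / (2 * Real.sqrt ε * (t - τ))) * Real.exp (-z ^ 2 / (4 * ε * (t - τ))) *
          (2 * τ * (Real.cos (α * (τ - t)) - Real.sin (α * (τ - t)))) with hFdef
  rw [abs_neg]
  have hRHS : 0 < Real.exp (-(1 * z) / Real.sqrt (ε * t)) := Real.exp_pos _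
  by_cases hF : IntervalIntegrable F volume 0 t
  swap
  · rw [intervalIntegral.integral_undef hF, abs_zero]
    positivity
  -- the comparison function and its antiderivative
  set H : ℝ → ℝ := fun τ => Real.exp (-z / Real.sqrt (ε * (t - τ))) with hHdef
  set M : ℝ → ℝ := fun τ => z * ε / (2 * Real.sqrt (ε * (t - τ)) ^ 3) *
      Real.exp (-z / Real.sqrt (ε * (t - τ))) with hMdef
  -- key bound on partial integrals
  have key : ∀ b ∈ Set.Ico (0:ℝ) t,
      |∫ τ in (0:ℝ)..b, F τ| ≤ K * Real.exp (-(1 * z) / Real.sqrt (ε * t)) := by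
    intro b hb
    obtain ⟨hb0, hbt⟩ := hb
    have hsub : ∀ τ ∈ Set.Icc (0:ℝ) b, 0 < t - τ := fun τ hτ => by
      have := hτ.2; linarith
    -- derivative computation
    have hderiv : ∀ τ ∈ Set.uIcc (0:ℝ) b, HasDerivAt (fun τ => -H τ) (M τ) τ := by
      intro τ hτ
      rw [Set.uIcc_of_le hb0] at hτ
      have hs : 0 < t - τ := hsub τ hτ
      have hw : 0 < ε * (t - τ) := by positivity
      have hq : 0 < Real.sqrt (ε * (t - τ)) := Real.sqrt_pos.mpr hw
      have h1 : HasDerivAt (fun τ : ℝ => ε * (t - τ)) (-ε) τ := by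
        have := ((hasDerivAt_id τ).const_sub t).const_mul ε
        simpa using this
      have h2 : HasDerivAt (fun τ : ℝ => Real.sqrt (ε * (t - τ)))
          (1 / (2 * Real.sqrt (ε * (t - τ))) * -ε) τ :=
        (Real.hasDerivAt_sqrt hw.ne').comp τ h1
      have h3 : HasDerivAt (fun τ : ℝ => (Real.sqrt (ε * (t - τ)))⁻¹)
          (-(1 / (2 * Real.sqrt (ε * (t - τ))) * -ε) / Real.sqrt (ε * (t - τ)) ^ 2) τ :=
        h2.inv hq.ne'
      have h4 := ((h3.const_mul (-z)).exp).neg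
      have heq : (fun τ : ℝ => -Real.exp (-z * (Real.sqrt (ε * (t - τ)))⁻¹))
          = fun τ => -H τ := by
        funext τ
        simp only [hHdef, div_eq_mul_inv]
      change HasDerivAt (fun τ : ℝ => -Real.exp (-z * (Real.sqrt (ε * (t - τ)))⁻¹)) _ τ at h4
      rw [heq] at h4
      convert h4 using 1
      rw [hMdef]
      simp only [div_eq_mul_inv]
      have hq2 : Real.sqrt (ε * (t - τ)) ≠ 0 := hq.ne'
      field_simp
    -- continuity of M on [0, b]
    have hMcont : ContinuousOn M (Set.uIcc (0:ℝ) b) := by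
      rw [Set.uIcc_of_le hb0]
      have hsq : ContinuousOn (fun τ : ℝ => Real.sqrt (ε * (t - τ))) (Set.Icc 0 b) :=
        (Real.continuous_sqrt.comp (by continuity)).continuousOn
      have hne : ∀ τ ∈ Set.Icc (0:ℝ) b, 2 * Real.sqrt (ε * (t - τ)) ^ 3 ≠ 0 := by
        intro τ hτ
        have hq : 0 < Real.sqrt (ε * (t - τ)) :=
          Real.sqrt_pos.mpr (by have := hsub τ hτ; positivity)
        positivity
      have hne2 : ∀ τ ∈ Set.Icc (0:ℝ) b, Real.sqrt (ε * (t - τ)) ≠ 0 := by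
        intro τ hτ
        exact (Real.sqrt_pos.mpr (by have := hsub τ hτ; positivity)).ne'
      exact ((continuousOn_const.div ((continuousOn_const.mul ((hsq.pow 3)))) hne)).mul
        ((continuousOn_const.div hsq hne2).rexp)
    have hMint : IntervalIntegrable M volume 0 b := hMcont.intervalIntegrable
    have hFTC : ∫ τ in (0:ℝ)..b, M τ = -H b - -H 0 :=
      intervalIntegral.integral_eq_sub_of_hasDerivAt hderiv hMint
    -- pointwise bound |F τ| ≤ K * M τ on (0, b]
    have hpt : ∀ τ ∈ Set.uIoc (0:ℝ) b, ‖F τ‖ ≤ K * M τ := by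
      intro τ hτ
      rw [Set.uIoc_of_le hb0] at hτ
      obtain ⟨hτ0, hτb⟩ := hτ
      have hs : 0 < t - τ := by linarith
      set s := t - τ with hsdef
      have hq : 0 < Real.sqrt (ε * s) := Real.sqrt_pos.mpr (by positivity)
      have hqs : Real.sqrt (ε * s) ^ 2 = ε * s := Real.sq_sqrt (by positivity)
      have hA : 0 < Real.sqrt (4 * π * s) := Real.sqrt_pos.mpr (by positivity)
      have hB : 0 < 2 * Real.sqrt ε * s := by
        have := Real.sqrt_pos.mpr hε; positivity
      -- bound the oscillatory factor
      have hosc : |2 * τ * (Real.cos (α * (τ - t)) - Real.sin (α * (τ - t)))| ≤ 4 * t := by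
        rw [abs_mul]
        have h1 : |2 * τ| ≤ 2 * t := by
          rw [abs_of_nonneg (by linarith : (0:ℝ) ≤ 2 * τ)]; linarith
        have h2 : |Real.cos (α * (τ - t)) - Real.sin (α * (τ - t))| ≤ 2 := by
          have := Real.abs_cos_le_one (α * (τ - t))
          have := Real.abs_sin_le_one (α * (τ - t))
          calc |Real.cos (α * (τ - t)) - Real.sin (α * (τ - t))|
              ≤ |Real.cos (α * (τ - t))| + |Real.sin (α * (τ - t))| := abs_sub _ _
            _ ≤ 2 := by linarith
        calc |2 * τ| * |Real.cos (α * (τ - t)) - Real.sin (α * (τ - t))|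
            ≤ (2 * t) * 2 := by
              apply mul_le_mul h1 h2 (abs_nonneg _) (by linarith)
          _ = 4 * t := by ring
      have hexp : Real.exp (-z ^ 2 / (4 * ε * s)) ≤
          Real.exp 1 * Real.exp (-z / Real.sqrt (ε * s)) := by
        have h := exp_sq_le_aux (z := z) hq
        rw [hqs] at h
        have h' : -z ^ 2 / (4 * ε * s) = -z ^ 2 / (4 * (ε * s)) := by ring_nf
        rw [h']
        exact h
      rw [Real.norm_eq_abs, hFdef]
      simp only
      rw [abs_mul]
      have hcoefpos : 0 ≤ 1 / Real.sqrt (4 * π * s) * (z / (2 * Real.sqrt ε * s)) *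
          Real.exp (-z ^ 2 / (4 * ε * s)) := by positivity
      rw [abs_of_nonneg hcoefpos]
      calc 1 / Real.sqrt (4 * π * s) * (z / (2 * Real.sqrt ε * s)) *
            Real.exp (-z ^ 2 / (4 * ε * s)) *
            |2 * τ * (Real.cos (α * (τ - t)) - Real.sin (α * (τ - t)))|
          ≤ 1 / Real.sqrt (4 * π * s) * (z / (2 * Real.sqrt ε * s)) *
            (Real.exp 1 * Real.exp (-z / Real.sqrt (ε * s))) * (4 * t) := by
            apply mul_le_mul (by
              apply mul_le_mul_of_nonneg_left hexp (by positivity)) hosc (abs_nonneg _)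
              (by positivity)
        _ = K * M τ := by
            rw [hKdef, hMdef]
            simp only [← hsdef]
            have h4π : Real.sqrt (4 * π * s) = Real.sqrt (4 * π) * Real.sqrt s :=
              Real.sqrt_mul (by positivity) s
            have hεs : Real.sqrt (ε * s) = Real.sqrt ε * Real.sqrt s :=
              Real.sqrt_mul hε.le s
            have hsεpos : 0 < Real.sqrt ε := Real.sqrt_pos.mpr hε
            have hsspos : 0 < Real.sqrt s := Real.sqrt_pos.mpr hs
            have h4πpos : 0 < Real.sqrt (4 * π) := Real.sqrt_pos.mpr (by positivity)
            have he3 : Real.sqrt ε ^ 3 = ε * Real.sqrt ε := by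
              rw [pow_succ, Real.sq_sqrt hε.le]
            have hs3 : Real.sqrt s ^ 3 = s * Real.sqrt s := by
              rw [pow_succ, Real.sq_sqrt hs.le]
            have hcube : (Real.sqrt ε * Real.sqrt s) ^ 3
                = ε * Real.sqrt ε * (s * Real.sqrt s) := by
              rw [mul_pow, he3, hs3]
            rw [h4π, hεs, hcube]
            field_simp
    -- apply the comparison
    have hbd : ‖∫ τ in (0:ℝ)..b, F τ‖ ≤ |∫ τ in (0:ℝ)..b, K * M τ| := by
      apply intervalIntegral.norm_integral_le_abs_of_norm_le
      · exact (ae_restrict_iff' measurableSet_uIoc).mpr (Filter.Eventually.of_forall hpt)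
      · exact hMint.const_mul K
    rw [intervalIntegral.integral_const_mul, hFTC] at hbd
    have hH0 : H 0 = Real.exp (-z / Real.sqrt (ε * t)) := by
      rw [hHdef]; simp
    have hHb_nonneg : 0 ≤ H b := le_of_lt (Real.exp_pos _)
    have hHmono : H b ≤ H 0 := by
      rw [hHdef]
      simp only
      apply Real.exp_le_exp.mpr
      rw [neg_div, neg_div, neg_le_neg_iff]
      have htb : 0 < t - b := by linarith
      apply div_le_div_of_nonneg_left hz.le
        (Real.sqrt_pos.mpr (by positivity))
      apply Real.sqrt_le_sqrt
      nlinarith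
    have habs : |K * (-H b - -H 0)| = K * (H 0 - H b) := by
      rw [abs_of_nonneg (by nlinarith)]
      ring
    rw [Real.norm_eq_abs] at hbd
    rw [habs] at hbd
    calc |∫ τ in (0:ℝ)..b, F τ| ≤ K * (H 0 - H b) := hbd
      _ ≤ K * H 0 := by nlinarith
      _ = K * Real.exp (-(1 * z) / Real.sqrt (ε * t)) := by rw [hH0]; norm_num
  -- pass to the limit b → t
  have hcont : ContinuousOn (fun b => ∫ τ in (0:ℝ)..b, F τ) (Set.uIcc (0:ℝ) t) :=
    intervalIntegral.continuousOn_primitive_interval' hF Set.left_mem_uIcc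
  have htmem : t ∈ Set.uIcc (0:ℝ) t := Set.right_mem_uIcc
  have htendsto : Filter.Tendsto (fun b => |∫ τ in (0:ℝ)..b, F τ|)
      (nhdsWithin t (Set.Ico 0 t)) (nhds |∫ τ in (0:ℝ)..t, F τ|) := by
    apply Filter.Tendsto.comp (continuous_abs.tendsto _)
    exact (hcont t htmem).mono_left
      (nhdsWithin_mono t (by rw [Set.uIcc_of_le ht.le]; exact Set.Ico_subset_Icc_self))
  haveI hne : (nhdsWithin t (Set.Ico 0 t)).NeBot := right_nhdsWithin_Ico_neBot ht
  have hfinal : |∫ τ in (0:ℝ)..t, F τ| ≤ K * Real.exp (-(1 * z) / Real.sqrt (ε * t)) :=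
    le_of_tendsto htendsto (Filter.eventually_of_mem self_mem_nhdsWithin key)
  calc |∫ τ in (0:ℝ)..t, F τ| ≤ K * Real.exp (-(1 * z) / Real.sqrt (ε * t)) := hfinal
    _ ≤ (K + 1) * Real.exp (-(1 * z) / Real.sqrt (ε * t)) := by nlinarith
end
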